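/- Let κ ∈ (0,1). There exists a constant c_κ > 0 with the following property: for every measurable f : ℝ → ℝ with |f|_κ < ∞, for every standard Brownian motion W on [0,T] and every random variable ξ independent of W, and for all 0 < s ≤ t ≤ T, one has E[ |f(W_t + ξ) − f(W_s + ξ)|² ] ≤ c_κ |f|_κ² (t−s)^κ s^{−1/2}. -/

import Mathlib

open MeasureTheory ProbabilityTheory
open scoped NNReal ENNReal Real

noncomputable section

/-- Square of the Sobolev–Slobodeckij seminorm
`|f|_κ² = ∫_ℝ ∫_ℝ |f(x) − f(y)|² / |x − y|^{2κ+1} dx dy` (as an extended real number). -/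
def slobSq (κ : ℝ) (f : ℝ → ℝ) : ENNReal :=
  ∫⁻ x, ∫⁻ y, ENNReal.ofReal (|f x - f y| ^ 2 / |x - y| ^ (2 * κ + 1)) ∂volume ∂volume

/-- A standard Brownian motion on `[0,T]`: continuous paths, `W 0 = 0` a.s., Gaussian
increments `W t − W s ∼ N(0, t−s)` which are independent of the past `(W u)_{u ≤ s}`. -/
structure IsBrownianMotion {Ω : Type*} [MeasurableSpace Ω] (P : Measure Ω) (T : ℝ)
    (W : ℝ → Ω → ℝ) : Prop where
  measurable : ∀ t, Measurable (W t)
  cont_paths : ∀ᵐ ω ∂P, ContinuousOn (fun t => W t ω) (Set.Icc 0 T)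
  init : ∀ᵐ ω ∂P, W 0 ω = 0
  gauss_incr : ∀ s t : ℝ, 0 ≤ s → s < t → t ≤ T →
    Measure.map (fun ω => W t ω - W s ω) P = gaussianReal 0 (Real.toNNReal (t - s))
  indep_incr : ∀ s t : ℝ, 0 ≤ s → s < t → t ≤ T →
    Indep (MeasurableSpace.comap (fun ω => W t ω - W s ω) inferInstance)
      (⨆ u ∈ Set.Icc (0:ℝ) s, MeasurableSpace.comap (W u) inferInstance) P

lemma aux_sup_bound {κ y : ℝ} (hκ : κ ∈ Set.Ioo (0:ℝ) 1) (hy : 0 ≤ y) :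
    y ^ (2*κ+1) * Real.exp (-(y^2)/2) ≤ 16 := by
  rcases le_total y 1 with h1 | h1
  · have h2 : y ^ (2*κ+1) ≤ 1 := Real.rpow_le_one hy h1 (by linarith [hκ.1])
    have h3 : Real.exp (-(y^2)/2) ≤ 1 := Real.exp_le_one_iff.mpr (by nlinarith)
    nlinarith [Real.exp_pos (-(y^2)/2), Real.rpow_nonneg hy (2*κ+1)]
  · have hy0 : 0 < y := lt_of_lt_of_le one_pos h1
    have h2 : y ^ (2*κ+1) ≤ y ^ (3:ℝ) :=
      Real.rpow_le_rpow_of_exponent_le h1 (by linarith [hκ.2])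
    have h3 : y^4/16 ≤ Real.exp (y^2/2) := by
      have h := Real.add_one_le_exp (y^2/4)
      have : (y^2/4 + 1)^2 ≤ (Real.exp (y^2/4))^2 := by
        nlinarith [Real.exp_pos (y^2/4)]
      calc y^4/16 ≤ (y^2/4 + 1)^2 := by nlinarith
        _ ≤ (Real.exp (y^2/4))^2 := this
        _ = Real.exp (y^2/2) := by rw [sq, ← Real.exp_add]; ring_nf
    have h4 : Real.exp (-(y^2)/2) ≤ 16/y^4 := by
      rw [neg_div, Real.exp_neg]
      rw [inv_le_comm₀ (Real.exp_pos _) (by positivity)]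
      calc (16/y^4)⁻¹ = y^4/16 := by field_simp
        _ ≤ Real.exp (y^2/2) := h3
    have h5 : y ^ (3:ℝ) = y^3 := by
      rw [show (3:ℝ) = ((3:ℕ):ℝ) by norm_num, Real.rpow_natCast]
    have hexp : 0 ≤ Real.exp (-(y^2)/2) := (Real.exp_pos _).le
    calc y ^ (2*κ+1) * Real.exp (-(y^2)/2) ≤ y^3 * (16/y^4) := by
          apply mul_le_mul (h5 ▸ h2) h4 hexp (by positivity)
      _ = 16/y := by field_simp
      _ ≤ 16 := by rw [div_le_iff₀ hy0]; nlinarith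

lemma aux_sqrt_inv_le {v : ℝ≥0} (hv : 0 < v) :
    (Real.sqrt (2 * Real.pi * v))⁻¹ ≤ (Real.sqrt v)⁻¹ := by
  have hvR : (0:ℝ) < v := hv
  apply inv_anti₀ (Real.sqrt_pos.mpr hvR)
  apply Real.sqrt_le_sqrt
  nlinarith [Real.pi_gt_three]

lemma aux_sqrt_inv_eq {v : ℝ≥0} (hv : 0 < v) :
    (Real.sqrt v)⁻¹ = (v:ℝ) ^ (-(1/2) : ℝ) := by
  have hvR : (0:ℝ) < v := hv
  rw [Real.sqrt_eq_rpow, ← Real.rpow_neg hvR.le]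

lemma aux_pdf_flat {v : ℝ≥0} (hv : 0 < v) (z : ℝ) :
    gaussianPDFReal 0 v z ≤ (v:ℝ) ^ (-(1/2) : ℝ) := by
  have hvR : (0:ℝ) < v := hv
  rw [gaussianPDFReal]
  have h1 : Real.exp (-(z - 0)^2 / (2 * v)) ≤ 1 := by
    apply Real.exp_le_one_iff.mpr
    apply div_nonpos_of_nonpos_of_nonneg (by nlinarith [sq_nonneg (z-0)]) (by positivity)
  calc (Real.sqrt (2 * Real.pi * v))⁻¹ * Real.exp (-(z - 0)^2 / (2 * v))
      ≤ (Real.sqrt (2 * Real.pi * v))⁻¹ * 1 := by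
        apply mul_le_mul_of_nonneg_left h1 (by positivity)
    _ ≤ (v:ℝ) ^ (-(1/2) : ℝ) := by
        rw [mul_one, ← aux_sqrt_inv_eq hv]; exact aux_sqrt_inv_le hv

lemma aux_pdf_tail {κ : ℝ} (hκ : κ ∈ Set.Ioo (0:ℝ) 1) {v : ℝ≥0} (hv : 0 < v) (z : ℝ) :
    |z| ^ (2*κ+1) * gaussianPDFReal 0 v z ≤ 16 * (v:ℝ) ^ κ := by
  have hvR : (0:ℝ) < v := hv
  set y : ℝ := |z| / Real.sqrt v with hy_def
  have hsv : (0:ℝ) < Real.sqrt v := Real.sqrt_pos.mpr hvR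
  have hy : 0 ≤ y := by positivity
  have hz : |z| = y * Real.sqrt v := by
    rw [hy_def, div_mul_cancel₀ _ hsv.ne']
  have hz2 : (z - 0)^2 = y^2 * v := by
    rw [sub_zero, ← sq_abs z, hz, mul_pow, Real.sq_sqrt hvR.le]
  rw [gaussianPDFReal, hz2, hz]
  have harg : -(y^2 * v) / (2 * v) = -(y^2)/2 := by field_simp
  rw [harg]
  have hpow : (y * Real.sqrt v) ^ (2*κ+1) = y ^ (2*κ+1) * Real.sqrt v ^ (2*κ+1) :=
    Real.mul_rpow hy hsv.le
  rw [hpow]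
  have hkey : y ^ (2*κ+1) * Real.exp (-(y^2)/2) ≤ 16 := aux_sup_bound hκ hy
  have hfact : Real.sqrt v ^ (2*κ+1) * (Real.sqrt v)⁻¹ = (v:ℝ) ^ κ := by
    rw [← Real.rpow_neg_one (Real.sqrt v), ← Real.rpow_add hsv,
      show (2*κ+1) + (-1) = 2*κ by ring, Real.sqrt_eq_rpow,
      ← Real.rpow_mul hvR.le]
    rw [show (1:ℝ)/2 * (2*κ) = κ by ring]
  calc y ^ (2*κ+1) * Real.sqrt v ^ (2*κ+1) * ((Real.sqrt (2*Real.pi*v))⁻¹ * Real.exp (-(y^2)/2))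
      ≤ y ^ (2*κ+1) * Real.sqrt v ^ (2*κ+1) * ((Real.sqrt v)⁻¹ * Real.exp (-(y^2)/2)) := by
        apply mul_le_mul_of_nonneg_left
        · exact mul_le_mul_of_nonneg_right (aux_sqrt_inv_le hv) (Real.exp_pos _).le
        · positivity
    _ = (y ^ (2*κ+1) * Real.exp (-(y^2)/2)) * (Real.sqrt v ^ (2*κ+1) * (Real.sqrt v)⁻¹) := by ring
    _ ≤ 16 * (v:ℝ) ^ κ := by
        rw [hfact]
        apply mul_le_mul_of_nonneg_right hkey (Real.rpow_nonneg hvR.le κ)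

lemma aux_slob_eq {κ : ℝ} (hκ : κ ∈ Set.Ioo (0:ℝ) 1) {f : ℝ → ℝ} (hf : Measurable f) :
    slobSq κ f = ∫⁻ z, (∫⁻ x, ENNReal.ofReal (|f (x + z) - f x| ^ 2) ∂volume)
      / ENNReal.ofReal (|z| ^ (2 * κ + 1)) ∂volume := by
  have hmeas : Measurable (fun p : ℝ × ℝ =>
      ENNReal.ofReal (|f (p.1 + p.2) - f p.1| ^ 2 / |p.2| ^ (2 * κ + 1))) := by
    apply Measurable.ennreal_ofReal
    apply Measurable.div
    · exact (((hf.comp (measurable_fst.add measurable_snd)).sub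
        (hf.comp measurable_fst)).abs.pow_const 2)
    · exact (measurable_snd.abs.pow_const _)
  have step1 : slobSq κ f = ∫⁻ x, ∫⁻ z,
      ENNReal.ofReal (|f (x + z) - f x| ^ 2 / |z| ^ (2 * κ + 1)) ∂volume ∂volume := by
    unfold slobSq
    refine lintegral_congr fun x => ?_
    rw [← lintegral_add_left_eq_self
      (fun y => ENNReal.ofReal (|f x - f y| ^ 2 / |x - y| ^ (2 * κ + 1))) x]
    refine lintegral_congr fun z => ?_
    have h1 : x - (x + z) = -z := by ring
    rw [h1, abs_neg, abs_sub_comm (f x) (f (x + z))]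
  have step2 : slobSq κ f = ∫⁻ z, ∫⁻ x,
      ENNReal.ofReal (|f (x + z) - f x| ^ 2 / |z| ^ (2 * κ + 1)) ∂volume ∂volume := by
    rw [step1]
    exact lintegral_lintegral_swap hmeas.aemeasurable
  rw [step2]
  have h0 : ∀ᵐ (z : ℝ) ∂volume, z ≠ 0 := by
    rw [ae_iff]; simpa using measure_singleton (0:ℝ)
  refine lintegral_congr_ae (h0.mono fun z hz => ?_)
  have hpos : 0 < |z| ^ (2 * κ + 1) :=
    Real.rpow_pos_of_pos (abs_pos.mpr hz) _
  have hpt : ∀ x, ENNReal.ofReal (|f (x + z) - f x| ^ 2 / |z| ^ (2 * κ + 1))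
      = ENNReal.ofReal (|f (x + z) - f x| ^ 2) * (ENNReal.ofReal (|z| ^ (2 * κ + 1)))⁻¹ := by
    intro x
    rw [ENNReal.ofReal_div_of_pos hpos, div_eq_mul_inv]
  simp_rw [hpt]
  rw [lintegral_mul_const' _ _ (ENNReal.inv_ne_top.mpr (ENNReal.ofReal_pos.mpr hpos).ne'),
    div_eq_mul_inv]

theorem statement10 (κ : ℝ) (hκ : κ ∈ Set.Ioo (0:ℝ) 1) :
    ∃ c : ℝ, 0 < c ∧
      ∀ (Ω : Type) (_ : MeasurableSpace Ω) (P : Measure Ω), IsProbabilityMeasure P →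
      ∀ T : ℝ, 0 < T →
      ∀ W : ℝ → Ω → ℝ, IsBrownianMotion P T W →
      ∀ ξ : Ω → ℝ, Measurable ξ →
        Indep (MeasurableSpace.comap ξ inferInstance)
          (⨆ t ∈ Set.Icc (0:ℝ) T, MeasurableSpace.comap (W t) inferInstance) P →
      ∀ f : ℝ → ℝ, Measurable f → slobSq κ f < ⊤ →
      ∀ s t : ℝ, 0 < s → s ≤ t → t ≤ T →
        ∫ ω, |f (W t ω + ξ ω) - f (W s ω + ξ ω)| ^ 2 ∂P
          ≤ c * (slobSq κ f).toReal * (t - s) ^ κ * s ^ (-(1/2) : ℝ) := by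
  obtain ⟨hκ0, hκ1⟩ := hκ
  refine ⟨16, by norm_num, ?_⟩
  intro Ω mΩ P hP T hT W hW ξ hξ hξindep f hf hslob s t hs hst htT
  rcases eq_or_lt_of_le hst with heq | hlt
  · subst heq
    simp [sub_self, Real.zero_rpow hκ0.ne']
  have hsT : s ≤ T := hst.trans htT
  set Z : Ω → ℝ := fun ω => W t ω - W s ω with hZ
  have mZ : Measurable Z := (hW.measurable t).sub (hW.measurable s)
  have mWs : Measurable (W s) := hW.measurable s
  set sN : ℝ≥0 := s.toNNReal with hsN_def
  set vN : ℝ≥0 := (t - s).toNNReal with hvN_def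
  have hsN : 0 < sN := Real.toNNReal_pos.mpr hs
  have hvN : 0 < vN := Real.toNNReal_pos.mpr (by linarith)
  have hsNc : (sN : ℝ) = s := Real.coe_toNNReal s hs.le
  have hvNc : (vN : ℝ) = t - s := Real.coe_toNNReal _ (by linarith)
  have hmapZ : Measure.map Z P = gaussianReal 0 vN := hW.gauss_incr s t hs.le hlt htT
  have hmapW : Measure.map (W s) P = gaussianReal 0 sN := by
    have h0 := hW.gauss_incr 0 s le_rfl hs hsT
    have hae : (fun ω => W s ω - W 0 ω) =ᵐ[P] W s := hW.init.mono fun ω h => by simp [h]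
    rw [← Measure.map_congr hae, h0, hsN_def, sub_zero]
  set g : Ω → ℝ × ℝ := fun ω => (Z ω, W s ω) with hg
  have mg : Measurable g := mZ.prodMk mWs
  have hindep2 : IndepFun Z (W s) P := by
    have h := hW.indep_incr s t hs.le hlt htT
    exact indep_of_indep_of_le_right h
      (le_biSup (fun u => MeasurableSpace.comap (W u) inferInstance) ⟨hs.le, le_refl s⟩)
  have hindep1 : IndepFun ξ g P := by
    have hle : MeasurableSpace.comap g inferInstance ≤
        ⨆ u ∈ Set.Icc (0:ℝ) T, MeasurableSpace.comap (W u) inferInstance := by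
      apply Measurable.comap_le
      have hWm : ∀ u, u ∈ Set.Icc (0:ℝ) T →
          Measurable[⨆ u ∈ Set.Icc (0:ℝ) T, MeasurableSpace.comap (W u) inferInstance] (W u) :=
        fun u hu => Measurable.of_comap_le
          (le_biSup (fun u => MeasurableSpace.comap (W u) inferInstance) hu)
      exact ((hWm t ⟨by linarith, htT⟩).sub (hWm s ⟨hs.le, hsT⟩)).prodMk (hWm s ⟨hs.le, hsT⟩)
    exact indep_of_indep_of_le_right hξindep hle
  have hPg : Measure.map g P = (gaussianReal 0 vN).prod (gaussianReal 0 sN) := by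
    rw [← hmapZ, ← hmapW]
    exact (indepFun_iff_map_prod_eq_prod_map_map mZ.aemeasurable mWs.aemeasurable).mp hindep2
  have hPpair : Measure.map (fun ω => (ξ ω, g ω)) P
      = (Measure.map ξ P).prod ((gaussianReal 0 vN).prod (gaussianReal 0 sN)) := by
    rw [← hPg]
    exact (indepFun_iff_map_prod_eq_prod_map_map hξ.aemeasurable mg.aemeasurable).mp hindep1
  haveI : IsProbabilityMeasure (Measure.map ξ P) := Measure.isProbabilityMeasure_map hξ.aemeasurable
  set F : ℝ × ℝ × ℝ → ℝ≥0∞ :=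
    fun p => ENNReal.ofReal (|f (p.2.2 + p.1 + p.2.1) - f (p.2.2 + p.1)| ^ 2) with hF_def
  have hFmeas : Measurable F := by
    apply Measurable.ennreal_ofReal
    apply Measurable.pow_const
    apply Measurable.abs
    exact ((hf.comp ((measurable_snd.snd.add measurable_fst).add measurable_snd.fst)).sub
      (hf.comp (measurable_snd.snd.add measurable_fst)))
  set G : ℝ → ℝ≥0∞ :=
    fun z => ∫⁻ x, ENNReal.ofReal (|f (x + z) - f x| ^ 2) ∂volume with hG_def
  have hGmeas : Measurable G := by
    apply Measurable.lintegral_prod_right'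
      (f := fun q : ℝ × ℝ => ENNReal.ofReal (|f (q.2 + q.1) - f q.2| ^ 2))
    exact (((hf.comp (measurable_snd.add measurable_fst)).sub
      (hf.comp measurable_snd)).abs.pow_const 2).ennreal_ofReal
  have hintnn : ∫ ω, |f (W t ω + ξ ω) - f (W s ω + ξ ω)| ^ 2 ∂P
      = (∫⁻ ω, ENNReal.ofReal (|f (W t ω + ξ ω) - f (W s ω + ξ ω)| ^ 2) ∂P).toReal := by
    exact integral_eq_lintegral_of_nonneg_ae (ae_of_all _ fun ω => by positivity)
      (((hf.comp ((hW.measurable t).add hξ)).sub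
        (hf.comp ((hW.measurable s).add hξ))).abs.pow_const 2).aestronglyMeasurable
  have hL1 : (∫⁻ ω, ENNReal.ofReal (|f (W t ω + ξ ω) - f (W s ω + ξ ω)| ^ 2) ∂P)
      = ∫⁻ p, F p ∂((Measure.map ξ P).prod ((gaussianReal 0 vN).prod (gaussianReal 0 sN))) := by
    rw [← hPpair, lintegral_map hFmeas (hξ.prodMk mg)]
    refine lintegral_congr fun ω => ?_
    have h2 : W s ω + ξ ω + (W t ω - W s ω) = W t ω + ξ ω := by ring
    simp only [hF_def, hg, hZ, h2]
  have hL2 : (∫⁻ p, F p ∂((Measure.map ξ P).prod ((gaussianReal 0 vN).prod (gaussianReal 0 sN))))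
      = ∫⁻ u, ∫⁻ z, ∫⁻ x, F (u, z, x) ∂(gaussianReal 0 sN) ∂(gaussianReal 0 vN)
        ∂(Measure.map ξ P) := by
    rw [lintegral_prod _ hFmeas.aemeasurable]
    refine lintegral_congr fun u => ?_
    exact lintegral_prod (fun q => F (u, q)) ((hFmeas.comp measurable_prodMk_left).aemeasurable)
  have hinner : ∀ u z : ℝ, (∫⁻ x, F (u, z, x) ∂(gaussianReal 0 sN))
      ≤ ENNReal.ofReal (s ^ (-(1/2):ℝ)) * G z := by
    intro u z
    have hmx : Measurable (fun x : ℝ => F (u, z, x)) :=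
      hFmeas.comp (measurable_const.prodMk (measurable_const.prodMk measurable_id))
    rw [gaussianReal_of_var_ne_zero 0 hsN.ne',
      lintegral_withDensity_eq_lintegral_mul volume (measurable_gaussianPDF 0 sN) hmx]
    have hstep : (∫⁻ x, F (u, z, x) ∂volume) = G z := by
      have h := lintegral_add_right_eq_self (μ := volume)
        (fun y => ENNReal.ofReal (|f (y + z) - f y| ^ 2)) u
      simpa [hF_def, hG_def] using h
    calc (∫⁻ x, (gaussianPDF 0 sN * fun x => F (u, z, x)) x ∂volume)
        ≤ ∫⁻ x, ENNReal.ofReal (s ^ (-(1/2):ℝ)) * F (u, z, x) ∂volume := by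
          refine lintegral_mono fun x => ?_
          have hb : gaussianPDF 0 sN x ≤ ENNReal.ofReal (s ^ (-(1/2):ℝ)) := by
            rw [gaussianPDF]
            exact ENNReal.ofReal_le_ofReal (by rw [← hsNc]; exact aux_pdf_flat hsN x)
          exact mul_le_mul_left hb _
      _ = ENNReal.ofReal (s ^ (-(1/2):ℝ)) * ∫⁻ x, F (u, z, x) ∂volume :=
          lintegral_const_mul _ hmx
      _ = ENNReal.ofReal (s ^ (-(1/2):ℝ)) * G z := by rw [hstep]
  have hmid : (∫⁻ z, G z ∂(gaussianReal 0 vN))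
      ≤ ENNReal.ofReal (16 * (t - s) ^ κ) * slobSq κ f := by
    rw [gaussianReal_of_var_ne_zero 0 hvN.ne',
      lintegral_withDensity_eq_lintegral_mul volume (measurable_gaussianPDF 0 vN) hGmeas]
    have h0 : ∀ᵐ (z : ℝ) ∂volume, z ≠ 0 := by
      rw [ae_iff]; simpa using measure_singleton (0:ℝ)
    calc (∫⁻ z, (gaussianPDF 0 vN * G) z ∂volume)
        ≤ ∫⁻ z, ENNReal.ofReal (16 * (t - s) ^ κ)
            * (G z / ENNReal.ofReal (|z| ^ (2 * κ + 1))) ∂volume := by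
          refine lintegral_mono_ae (h0.mono fun z hz => ?_)
          have hB0 : (0:ℝ≥0∞) < ENNReal.ofReal (|z| ^ (2 * κ + 1)) :=
            ENNReal.ofReal_pos.mpr (Real.rpow_pos_of_pos (abs_pos.mpr hz) _)
          have hBt : ENNReal.ofReal (|z| ^ (2 * κ + 1)) ≠ ⊤ := ENNReal.ofReal_ne_top
          have hpdf : gaussianPDF 0 vN z
              ≤ ENNReal.ofReal (16 * (t - s) ^ κ) / ENNReal.ofReal (|z| ^ (2 * κ + 1)) := by
            rw [ENNReal.le_div_iff_mul_le (Or.inl hB0.ne') (Or.inl hBt), gaussianPDF,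
              ← ENNReal.ofReal_mul (gaussianPDFReal_nonneg 0 vN z)]
            apply ENNReal.ofReal_le_ofReal
            have h := aux_pdf_tail ⟨hκ0, hκ1⟩ hvN z
            rw [hvNc] at h
            calc gaussianPDFReal 0 vN z * |z| ^ (2 * κ + 1)
                = |z| ^ (2 * κ + 1) * gaussianPDFReal 0 vN z := by ring
              _ ≤ 16 * (t - s) ^ κ := h
          calc (gaussianPDF 0 vN * G) z = gaussianPDF 0 vN z * G z := rfl
            _ ≤ (ENNReal.ofReal (16 * (t - s) ^ κ) / ENNReal.ofReal (|z| ^ (2 * κ + 1))) * G z :=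
                mul_le_mul_left hpdf _
            _ = ENNReal.ofReal (16 * (t - s) ^ κ)
                * (G z / ENNReal.ofReal (|z| ^ (2 * κ + 1))) := by
                rw [div_eq_mul_inv, div_eq_mul_inv]; ring
      _ = ENNReal.ofReal (16 * (t - s) ^ κ)
          * ∫⁻ z, G z / ENNReal.ofReal (|z| ^ (2 * κ + 1)) ∂volume :=
          lintegral_const_mul _ (hGmeas.div ((measurable_id.abs.pow_const _).ennreal_ofReal))
      _ = ENNReal.ofReal (16 * (t - s) ^ κ) * slobSq κ f := by
          rw [aux_slob_eq ⟨hκ0, hκ1⟩ hf]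
  have htotal : (∫⁻ ω, ENNReal.ofReal (|f (W t ω + ξ ω) - f (W s ω + ξ ω)| ^ 2) ∂P)
      ≤ ENNReal.ofReal (s ^ (-(1/2):ℝ)) * (ENNReal.ofReal (16 * (t - s) ^ κ) * slobSq κ f) := by
    rw [hL1, hL2]
    calc (∫⁻ u, ∫⁻ z, ∫⁻ x, F (u, z, x) ∂(gaussianReal 0 sN) ∂(gaussianReal 0 vN)
          ∂(Measure.map ξ P))
        ≤ ∫⁻ _u, ENNReal.ofReal (s ^ (-(1/2):ℝ)) * (ENNReal.ofReal (16 * (t - s) ^ κ)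
            * slobSq κ f) ∂(Measure.map ξ P) := by
          refine lintegral_mono fun u => ?_
          calc (∫⁻ z, ∫⁻ x, F (u, z, x) ∂(gaussianReal 0 sN) ∂(gaussianReal 0 vN))
              ≤ ∫⁻ z, ENNReal.ofReal (s ^ (-(1/2):ℝ)) * G z ∂(gaussianReal 0 vN) :=
                lintegral_mono (hinner u)
            _ = ENNReal.ofReal (s ^ (-(1/2):ℝ)) * ∫⁻ z, G z ∂(gaussianReal 0 vN) :=
                lintegral_const_mul _ hGmeas
            _ ≤ ENNReal.ofReal (s ^ (-(1/2):ℝ)) * (ENNReal.ofReal (16 * (t - s) ^ κ)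
                * slobSq κ f) := mul_le_mul_right hmid _
      _ = ENNReal.ofReal (s ^ (-(1/2):ℝ)) * (ENNReal.ofReal (16 * (t - s) ^ κ)
          * slobSq κ f) := by simp
  have hRfin : ENNReal.ofReal (s ^ (-(1/2):ℝ)) * (ENNReal.ofReal (16 * (t - s) ^ κ)
      * slobSq κ f) ≠ ⊤ :=
    ENNReal.mul_ne_top ENNReal.ofReal_ne_top (ENNReal.mul_ne_top ENNReal.ofReal_ne_top hslob.ne)
  rw [hintnn]
  have hmono := ENNReal.toReal_mono hRfin htotal
  rw [ENNReal.toReal_mul, ENNReal.toReal_mul,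
    ENNReal.toReal_ofReal (Real.rpow_nonneg hs.le _),
    ENNReal.toReal_ofReal (mul_nonneg (by norm_num) (Real.rpow_nonneg (by linarith) κ))] at hmono
  calc (∫⁻ ω, ENNReal.ofReal (|f (W t ω + ξ ω) - f (W s ω + ξ ω)| ^ 2) ∂P).toReal
      ≤ s ^ (-(1/2):ℝ) * (16 * (t - s) ^ κ * (slobSq κ f).toReal) := hmono
    _ = 16 * (slobSq κ f).toReal * (t - s) ^ κ * s ^ (-(1/2):ℝ) := by ring

end
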